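/- Let X, Y have unit-norm columns and set Cˣ = XᵀX, Cʸ = YᵀY. Over the transportation polytope Π(p,q), minimizing the Gromov–Wasserstein objective Σ_{i,j,k,l} (Cˣ_{ik} − Cʸ_{jl})² Γ_{ij} Γ_{kl} is equivalent to maximizing ‖XΓYᵀ‖_F²: specifically, the GW objective equals pᵀ(Cˣ)²p + qᵀ(Cʸ)²q − 2‖XΓYᵀ‖_F² for every Γ ∈ Π(p,q). -/

import Mathlib

/-!
Expanding the square splits the objective into three parts. In the two squared terms only one
index of each factor `Γ` is coupled to the cost, so summing out the free index replaces `Γ` by its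
marginals `p` and `q`. The cross term is `∑ Cˣ_{ik} Cʸ_{jl} Γ_{ij} Γ_{kl} = tr (Γᵀ Cˣ Γ Cʸ)`, and
cyclicity of the trace turns this into `tr ((X Γ Yᵀ)ᵀ (X Γ Yᵀ)) = ‖X Γ Yᵀ‖_F²`.
-/

open Matrix BigOperators

open Finset

section
variable {ι κ α β R : Type*} [Fintype ι] [Fintype κ] [Fintype α] [Fintype β]

theorem sum_mul_mul_eq_of_row_sums [CommSemiring R] {Γ : Matrix ι κ R} {p : ι → R}
    (hΓp : ∀ i, ∑ j, Γ i j = p i) (f : ι → ι → R) :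
    ∑ i, ∑ j, ∑ k, ∑ l, f i k * Γ i j * Γ k l = ∑ i, ∑ k, p i * f i k * p k := by
  refine sum_congr rfl fun i _ => ?_
  calc ∑ j, ∑ k, ∑ l, f i k * Γ i j * Γ k l = ∑ j, ∑ k, f i k * Γ i j * p k := by
        simp_rw [← mul_sum, hΓp]
    _ = ∑ k, (∑ j, Γ i j) * (f i k * p k) := by
        rw [sum_comm]
        exact sum_congr rfl fun k _ => by rw [sum_mul]; exact sum_congr rfl fun j _ => by ring
    _ = ∑ k, p i * f i k * p k := by simp_rw [hΓp, mul_assoc]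

theorem sum_mul_mul_eq_of_col_sums [CommSemiring R] {Γ : Matrix ι κ R} {q : κ → R}
    (hΓq : ∀ j, ∑ i, Γ i j = q j) (g : κ → κ → R) :
    ∑ i, ∑ j, ∑ k, ∑ l, g j l * Γ i j * Γ k l = ∑ j, ∑ l, q j * g j l * q l := by
  rw [← sum_mul_mul_eq_of_row_sums (Γ := Γᵀ) hΓq g, sum_comm]
  exact sum_congr rfl fun j _ => sum_congr rfl fun i _ => sum_comm

theorem trace_transpose_mul_eq_sum [NonUnitalNonAssocSemiring R] (M N : Matrix α β R) :
    trace (Mᵀ * N) = ∑ a, ∑ b, M a b * N a b := by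
  simp only [trace, diag_apply, mul_apply, transpose_apply]
  exact sum_comm

theorem trace_transpose_mul_mul_mul_of_isSymm [CommSemiring R] (Γ : Matrix ι κ R)
    (A : Matrix ι ι R) {B : Matrix κ κ R} (hB : B.IsSymm) :
    trace (Γᵀ * (A * Γ * B)) = ∑ i, ∑ j, ∑ k, ∑ l, A i k * B j l * Γ i j * Γ k l := by
  simp only [trace_transpose_mul_eq_sum, mul_apply, mul_sum, sum_mul]
  refine sum_congr rfl fun i _ => sum_congr rfl fun j _ => ?_
  rw [sum_comm]
  refine sum_congr rfl fun k _ => sum_congr rfl fun l _ => ?_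
  rw [hB.apply l j]
  ring

theorem sum_sq_mul_mul_transpose_apply [CommSemiring R] (X : Matrix α ι R) (Γ : Matrix ι κ R)
    (Y : Matrix β κ R) :
    ∑ a, ∑ b, (X * Γ * Yᵀ) a b ^ 2
      = ∑ i, ∑ j, ∑ k, ∑ l, (Xᵀ * X) i k * (Yᵀ * Y) j l * Γ i j * Γ k l := by
  have hcycle : trace ((X * Γ * Yᵀ)ᵀ * (X * Γ * Yᵀ)) = trace (Γᵀ * (Xᵀ * X * Γ * (Yᵀ * Y))) := by
    simp only [transpose_mul, transpose_transpose, Matrix.mul_assoc]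
    rw [trace_mul_comm]
    simp only [Matrix.mul_assoc]
  calc ∑ a, ∑ b, (X * Γ * Yᵀ) a b ^ 2 = trace ((X * Γ * Yᵀ)ᵀ * (X * Γ * Yᵀ)) := by
        simp only [trace_transpose_mul_eq_sum, sq]
    _ = trace (Γᵀ * (Xᵀ * X * Γ * (Yᵀ * Y))) := hcycle
    _ = _ := trace_transpose_mul_mul_mul_of_isSymm Γ _ <| by
      rw [IsSymm, transpose_mul, transpose_transpose]

end

theorem gw_eq_frobenius_objective_general
    {d n m : ℕ} (X : Matrix (Fin d) (Fin n) ℝ) (Y : Matrix (Fin d) (Fin m) ℝ)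
    (p : Fin n → ℝ) (q : Fin m → ℝ)
    (Γ : Matrix (Fin n) (Fin m) ℝ)
    (hΓp : ∀ i, ∑ j, Γ i j = p i) (hΓq : ∀ j, ∑ i, Γ i j = q j) :
    ∑ i, ∑ j, ∑ k, ∑ l, ((Xᵀ * X) i k - (Yᵀ * Y) j l) ^ 2 * Γ i j * Γ k l
      = (∑ i, ∑ k, p i * ((Xᵀ * X) i k) ^ 2 * p k)
        + (∑ j, ∑ l, q j * ((Yᵀ * Y) j l) ^ 2 * q l)
        - 2 * ∑ a, ∑ b, ((X * Γ * Yᵀ) a b) ^ 2 := by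
  have expand : ∀ i j k l, ((Xᵀ * X) i k - (Yᵀ * Y) j l) ^ 2 * Γ i j * Γ k l
      = (Xᵀ * X) i k ^ 2 * Γ i j * Γ k l + (Yᵀ * Y) j l ^ 2 * Γ i j * Γ k l
        - 2 * ((Xᵀ * X) i k * (Yᵀ * Y) j l * Γ i j * Γ k l) := fun _ _ _ _ => by ring
  simp only [expand, sum_sub_distrib, sum_add_distrib]
  rw [sum_mul_mul_eq_of_row_sums hΓp (fun i k => (Xᵀ * X) i k ^ 2),
    sum_mul_mul_eq_of_col_sums hΓq (fun j l => (Yᵀ * Y) j l ^ 2),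
    sum_sq_mul_mul_transpose_apply]
  simp only [mul_sum]

/-- GW/Frobenius equivalence: for unit-norm columns and Cˣ = XᵀX, Cʸ = YᵀY, the
Gromov–Wasserstein objective equals pᵀ(Cˣ)²p + qᵀ(Cʸ)²q − 2‖X Γ Yᵀ‖_F² on Π(p,q),
so minimizing it is equivalent to maximizing ‖X Γ Yᵀ‖_F². -/
theorem gw_eq_frobenius_objective
    {d n m : ℕ} (X : Matrix (Fin d) (Fin n) ℝ) (Y : Matrix (Fin d) (Fin m) ℝ)
    (hX : ∀ i, ∑ k, (X k i) ^ 2 = 1) (hY : ∀ j, ∑ k, (Y k j) ^ 2 = 1)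
    (p : Fin n → ℝ) (q : Fin m → ℝ)
    (hp0 : ∀ i, 0 ≤ p i) (hq0 : ∀ j, 0 ≤ q j)
    (hp1 : ∑ i, p i = 1) (hq1 : ∑ j, q j = 1)
    (Γ : Matrix (Fin n) (Fin m) ℝ)
    (hΓ0 : ∀ i j, 0 ≤ Γ i j)
    (hΓp : ∀ i, ∑ j, Γ i j = p i) (hΓq : ∀ j, ∑ i, Γ i j = q j) :
    ∑ i, ∑ j, ∑ k, ∑ l, ((Xᵀ * X) i k - (Yᵀ * Y) j l) ^ 2 * Γ i j * Γ k l
      = (∑ i, ∑ k, p i * ((Xᵀ * X) i k) ^ 2 * p k)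
        + (∑ j, ∑ l, q j * ((Yᵀ * Y) j l) ^ 2 * q l)
        - 2 * ∑ a, ∑ b, ((X * Γ * Yᵀ) a b) ^ 2 :=
  gw_eq_frobenius_objective_general X Y p q Γ hΓp hΓq
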